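/- Let G = (V,E) be a finite simple graph with injective identifiers id : V → ℕ, and consider the greedy recoloring step on colorings c : V → ℕ. Then every sequence of recoloring steps starting from an arbitrary coloring has length at most |V|; more precisely, each vertex performs at most one recoloring step in any such sequence. -/

import Mathlib

/-!
A recoloring step leaves its vertex conflict-free, since the new color avoids every neighbor's
color. A conflict-free vertex stays conflict-free: it keeps its color, and any neighbor that
recolors picks a color different from it. As only vertices in conflict may recolor, no vertex
recolors twice, so the recolored vertices of a sequence are distinct.
-/

/-- Vertex `v` is in conflict in coloring `c` if some neighbor shares its color. -/
def Conflict {V : Type*} (G : SimpleGraph V) (c : V → ℕ) (v : V) : Prop :=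
  ∃ w, G.Adj v w ∧ c w = c v

/-- Vertex `v` is enabled in `c` if it is in conflict and every neighbor sharing
its color has a larger identifier. -/
def Enabled {V : Type*} (G : SimpleGraph V) (id : V → ℕ) (c : V → ℕ) (v : V) : Prop :=
  Conflict G c v ∧ ∀ w, G.Adj v w → c w = c v → id v < id w

/-- The least color in `{1, …, δ(v)+1}` not used by any neighbor of `v`. -/
noncomputable def newColor {V : Type*} [Fintype V] (G : SimpleGraph V)
    [DecidableRel G.Adj] (c : V → ℕ) (v : V) : ℕ :=
  sInf {k : ℕ | 1 ≤ k ∧ k ≤ G.degree v + 1 ∧ ∀ w, G.Adj v w → c w ≠ k}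

/-- A greedy recoloring step at vertex `v` turns `c` into `c'`: `v` is enabled and
`c'` recolors `v` with the least color in `{1, …, δ(v)+1}` unused by `v`'s
neighbors, leaving all other vertices unchanged. -/
def RecolorStep {V : Type*} [Fintype V] [DecidableEq V] (G : SimpleGraph V)
    [DecidableRel G.Adj] (id : V → ℕ) (c : V → ℕ) (v : V) (c' : V → ℕ) : Prop :=
  Enabled G id c v ∧ c' = Function.update c v (newColor G c v)

section

variable {V : Type*} [Fintype V] (G : SimpleGraph V) [DecidableRel G.Adj]

/-- The `δ(v)` neighbors of `v` cannot use all `δ(v) + 1` colors of `{1, …, δ(v)+1}`. -/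
lemma exists_color_unused_by_neighbors (c : V → ℕ) (v : V) :
    ∃ k, 1 ≤ k ∧ k ≤ G.degree v + 1 ∧ ∀ w, G.Adj v w → c w ≠ k := by
  have hcard : ((G.neighborFinset v).image c).card < (Finset.Icc 1 (G.degree v + 1)).card := by
    calc ((G.neighborFinset v).image c).card
        ≤ (G.neighborFinset v).card := Finset.card_image_le
      _ = G.degree v := G.card_neighborFinset_eq_degree v
      _ < (Finset.Icc 1 (G.degree v + 1)).card := by simp
  obtain ⟨k, hk, hk_unused⟩ := Finset.exists_mem_notMem_of_card_lt_card hcard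
  rw [Finset.mem_Icc] at hk
  refine ⟨k, hk.1, hk.2, fun w hw hck => hk_unused ?_⟩
  exact Finset.mem_image.mpr ⟨w, (G.mem_neighborFinset v w).mpr hw, hck⟩

lemma newColor_ne_of_adj (c : V → ℕ) {v w : V} (hadj : G.Adj v w) :
    c w ≠ newColor G c v :=
  (Nat.sInf_mem (exists_color_unused_by_neighbors G c v)).2.2 w hadj

variable [DecidableEq V] {id : V → ℕ} {c c' : V → ℕ} {u v : V}

lemma RecolorStep.not_conflict (h : RecolorStep G id c v c') : ¬ Conflict G c' v := by
  rintro ⟨w, hw, hcw⟩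
  rw [h.2, Function.update_of_ne (G.ne_of_adj hw).symm, Function.update_self] at hcw
  exact newColor_ne_of_adj G c hw hcw

lemma RecolorStep.not_conflict_of_not_conflict (h : RecolorStep G id c u c')
    (hv : ¬ Conflict G c v) : ¬ Conflict G c' v := by
  have hvu : v ≠ u := by
    rintro rfl
    exact hv h.1.1
  rintro ⟨w, hw, hcw⟩
  rw [h.2, Function.update_of_ne hvu] at hcw
  by_cases hwu : w = u
  · subst hwu
    rw [Function.update_self] at hcw
    exact newColor_ne_of_adj G c hw.symm hcw.symm
  · rw [Function.update_of_ne hwu] at hcw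
    exact hv ⟨w, hw, hcw⟩

variable {len : ℕ} {cs : ℕ → V → ℕ} {vs : ℕ → V}

lemma not_conflict_of_le (hsteps : ∀ i < len, RecolorStep G id (cs i) (vs i) (cs (i + 1)))
    {i k : ℕ} (hik : i ≤ k) (hk : k ≤ len) (hv : ¬ Conflict G (cs i) v) :
    ¬ Conflict G (cs k) v := by
  induction k, hik using Nat.le_induction with
  | base => exact hv
  | succ k _ ih => exact (hsteps k hk).not_conflict_of_not_conflict G (ih (by omega))

lemma recolored_vertex_ne_of_lt
    (hsteps : ∀ i < len, RecolorStep G id (cs i) (vs i) (cs (i + 1)))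
    {i j : ℕ} (hij : i < j) (hj : j < len) : vs i ≠ vs j := by
  intro hv
  have hfree : ¬ Conflict G (cs j) (vs i) :=
    not_conflict_of_le G hsteps hij hj.le ((hsteps i (hij.trans hj)).not_conflict G)
  exact hfree (hv ▸ (hsteps j hj).1.1)

end

theorem recolor_sequence_length_le_card_general {V : Type*} [Fintype V] [DecidableEq V]
    (G : SimpleGraph V) [DecidableRel G.Adj] (id : V → ℕ)
    (len : ℕ) (cs : ℕ → V → ℕ) (vs : ℕ → V)
    (hsteps : ∀ i < len, RecolorStep G id (cs i) (vs i) (cs (i + 1))) :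
    (∀ i j, i < len → j < len → vs i = vs j → i = j) ∧ len ≤ Fintype.card V := by
  have hinj : ∀ i j, i < len → j < len → vs i = vs j → i = j := by
    intro i j hi hj hv
    rcases lt_trichotomy i j with hij | hij | hij
    · exact absurd hv (recolored_vertex_ne_of_lt G hsteps hij hj)
    · exact hij
    · exact absurd hv.symm (recolored_vertex_ne_of_lt G hsteps hij hi)
  refine ⟨hinj, ?_⟩
  simpa using Fintype.card_le_of_injective (fun k : Fin len => vs k)
    fun a b hab => Fin.ext (hinj a b a.2 b.2 hab)

/-- In any sequence of greedy recoloring steps, each vertex is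
recolored at most once; hence every such sequence has length at most `|V|`. -/
theorem recolor_sequence_length_le_card {V : Type*} [Fintype V] [DecidableEq V]
    (G : SimpleGraph V) [DecidableRel G.Adj] (id : V → ℕ)
    (hinj : Function.Injective id)
    (len : ℕ) (cs : ℕ → V → ℕ) (vs : ℕ → V)
    (hsteps : ∀ i < len, RecolorStep G id (cs i) (vs i) (cs (i + 1))) :
    (∀ i j, i < len → j < len → vs i = vs j → i = j) ∧ len ≤ Fintype.card V :=
  recolor_sequence_length_le_card_general G id len cs vs hsteps
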